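/- arXiv:2408.04179 — 3 statements merged into one kernel-verified Lean document; each statement's English description precedes it below -/
import Mathlib

section
/- For any real number λ with λ ∉ [0,1] and λ ≠ -1, and any positive integer n, the sum ∑_{j=1}^n j^λ is strictly less than (1/(λ+1)) · [(n + 1/2)^{λ+1} − (1/2)^{λ+1}]. -/
open Finset Real

-- Bernoulli for negative exponent
lemma bern_neg {s p : ℝ} (hs : -1 < s) (hs' : s ≠ 0) (hp : p < 0) :
    1 + p * s < (1 + s) ^ p := by
  have h1 : 0 < 1 + s := by linarith
  have hlog : Real.log (1 + s) < s := by
    have h2 : 1 + s ≠ 1 := by intro h; apply hs'; linarith [h]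
    have := Real.log_lt_sub_one_of_pos h1 h2
    linarith
  have h3 : p * s < p * Real.log (1 + s) := by
    exact mul_lt_mul_of_neg_left hlog hp
  have h4 : 1 + p * Real.log (1 + s) ≤ Real.exp (p * Real.log (1 + s)) := by
    linarith [Real.add_one_le_exp (p * Real.log (1 + s))]
  rw [Real.rpow_def_of_pos h1, mul_comm]
  ring_nf
  ring_nf at h3 h4
  linarith

-- tangent line inequality
lemma tangent_lt {lam c x : ℝ} (hlam : lam ∉ Set.Icc (0:ℝ) 1) (hc : 0 < c) (hx : 0 < x)
    (hne : x ≠ c) :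
    c ^ lam + lam * c ^ (lam - 1) * (x - c) < x ^ lam := by
  set s : ℝ := x / c - 1 with hs_def
  have hs : -1 < s := by
    have : 0 < x / c := div_pos hx hc
    simp only [hs_def]; linarith
  have hs' : s ≠ 0 := by
    simp only [hs_def]
    intro h
    apply hne
    field_simp at h
    linarith
  have h1s : 1 + s = x / c := by simp [hs_def]
  have key : 1 + lam * s < (1 + s) ^ lam := by
    rcases (by
      simp only [Set.mem_Icc, not_and_or, not_le] at hlam
      exact hlam : lam < 0 ∨ 1 < lam) with h | h
    · exact bern_neg hs hs' h
    · exact one_add_mul_self_lt_rpow_one_add hs.le hs' h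
  have hcp : (0:ℝ) < c ^ lam := Real.rpow_pos_of_pos hc _
  have h2 : (1 + s) ^ lam = x ^ lam / c ^ lam := by
    rw [h1s, Real.div_rpow hx.le hc.le]
  have h3 : c ^ lam * (1 + lam * s) < x ^ lam := by
    have := mul_lt_mul_of_pos_left key hcp
    rw [h2] at this
    calc c ^ lam * (1 + lam * s) < c ^ lam * (x ^ lam / c ^ lam) := this
      _ = x ^ lam := by field_simp
  have h4 : c ^ (lam - 1) = c ^ lam / c := by
    rw [Real.rpow_sub hc, Real.rpow_one]
  calc c ^ lam + lam * c ^ (lam - 1) * (x - c)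
      = c ^ lam * (1 + lam * s) := by
        rw [h4, hs_def]; field_simp
    _ < x ^ lam := h3

-- per-term inequality
lemma per_term {lam : ℝ} (hlam : lam ∉ Set.Icc (0:ℝ) 1) (hne : lam ≠ -1)
    {c : ℝ} (hc : 1 ≤ c) :
    c ^ lam < (1 / (lam + 1)) * ((c + 1/2) ^ (lam + 1) - (c - 1/2) ^ (lam + 1)) := by
  set a : ℝ := c - 1/2 with ha_def
  set b : ℝ := c + 1/2 with hb_def
  have ha : 0 < a := by simp only [ha_def]; linarith
  have hab : a < b := by simp only [ha_def, hb_def]; linarith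
  have hposIcc : ∀ x ∈ Set.Icc a b, 0 < x := fun x hx => lt_of_lt_of_le ha hx.1
  have hfc : ContinuousOn (fun x : ℝ => c ^ lam + lam * c ^ (lam - 1) * (x - c)) (Set.Icc a b) := by
    fun_prop
  have hgc : ContinuousOn (fun x : ℝ => x ^ lam) (Set.Icc a b) := by
    intro x hx
    exact (Real.continuousAt_rpow_const x lam (Or.inl (hposIcc x hx).ne')).continuousWithinAt
  have hlt := intervalIntegral.integral_lt_integral_of_continuousOn_of_le_of_exists_lt hab hfc hgc
    (fun x hx => by
      rcases eq_or_ne x c with rfl | hxc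
      · simp
      · exact (tangent_lt hlam (by linarith) (lt_of_lt_of_le ha hx.1.le) hxc).le)
    ⟨b, Set.right_mem_Icc.2 hab.le,
      tangent_lt hlam (by linarith) (by linarith) (by simp only [hb_def]; intro h; linarith [h])⟩
  have hL : (∫ x in a..b, (c ^ lam + lam * c ^ (lam - 1) * (x - c))) = c ^ lam := by
    have hi1 : IntervalIntegrable (fun _ : ℝ => c ^ lam) MeasureTheory.volume a b :=
      intervalIntegrable_const
    have hi2 : IntervalIntegrable (fun x : ℝ => lam * c ^ (lam - 1) * (x - c))
        MeasureTheory.volume a b := by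
      apply Continuous.intervalIntegrable; fun_prop
    have hid : IntervalIntegrable (fun x : ℝ => x) MeasureTheory.volume a b := by
      apply Continuous.intervalIntegrable; fun_prop
    rw [intervalIntegral.integral_add hi1 hi2,
      intervalIntegral.integral_const,
      intervalIntegral.integral_const_mul,
      intervalIntegral.integral_sub hid intervalIntegrable_const,
      integral_id, intervalIntegral.integral_const]
    simp only [ha_def, hb_def, smul_eq_mul]
    ring
  have hR : (∫ x in a..b, x ^ lam) = (b ^ (lam + 1) - a ^ (lam + 1)) / (lam + 1) := by
    apply integral_rpow
    right
    refine ⟨hne, ?_⟩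
    rw [Set.uIcc_of_le hab.le]
    intro h
    exact absurd (hposIcc 0 h) (lt_irrefl 0)
  rw [hL, hR] at hlt
  calc c ^ lam < (b ^ (lam + 1) - a ^ (lam + 1)) / (lam + 1) := hlt
    _ = (1 / (lam + 1)) * ((c + 1/2) ^ (lam + 1) - (c - 1/2) ^ (lam + 1)) := by
        rw [ha_def, hb_def]; ring

theorem stmt_0 (lam : ℝ) (hlam : lam ∉ Set.Icc (0:ℝ) 1) (hne : lam ≠ -1)
    (n : ℕ) (hn : 0 < n) :
    ∑ j ∈ Finset.Icc 1 n, (j : ℝ) ^ lam <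
      (1 / (lam + 1)) * (((n : ℝ) + 1/2) ^ (lam + 1) - (1/2 : ℝ) ^ (lam + 1)) := by
  set F : ℕ → ℝ := fun k => (1 / (lam + 1)) * ((k : ℝ) + 1/2) ^ (lam + 1) with hF
  have key : ∑ j ∈ Finset.Icc 1 n, (j : ℝ) ^ lam <
      ∑ j ∈ Finset.Icc 1 n, (F j - F (j - 1)) := by
    apply Finset.sum_lt_sum_of_nonempty
    · exact Finset.nonempty_Icc.2 hn
    · intro j hj
      have hj1 : 1 ≤ j := (Finset.mem_Icc.1 hj).1
      have hjc : (1:ℝ) ≤ (j:ℝ) := by exact_mod_cast hj1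
      have hcast : ((j - 1 : ℕ) : ℝ) = (j : ℝ) - 1 := by
        rw [Nat.cast_sub hj1]; simp
      have := per_term hlam hne hjc
      calc (j:ℝ) ^ lam
          < (1 / (lam + 1)) * (((j:ℝ) + 1/2) ^ (lam + 1) - ((j:ℝ) - 1/2) ^ (lam + 1)) := this
        _ = F j - F (j - 1) := by
            simp only [hF, hcast]
            ring_nf
  have tele : ∑ j ∈ Finset.Icc 1 n, (F j - F (j - 1)) = F n - F 0 := by
    clear key hn
    induction n with
    | zero => simp
    | succ k ih =>
      rw [Finset.sum_Icc_succ_top (Nat.le_add_left 1 k), ih]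
      simp only [Nat.add_sub_cancel]
      ring
  rw [tele] at key
  calc ∑ j ∈ Finset.Icc 1 n, (j : ℝ) ^ lam < F n - F 0 := key
    _ = (1 / (lam + 1)) * (((n : ℝ) + 1/2) ^ (lam + 1) - (1/2 : ℝ) ^ (lam + 1)) := by
        simp only [hF, Nat.cast_zero]
        ring_nf
end

section
/- Let c > 0, s a nonnegative integer, and (V_t)_{t≥1} a martingale with respect to a filtration (F_t). Suppose a process (M_t)_{t≥1} satisfies E[M_{t+1} | F_t] = M_t + c t^s V_t for all t ≥ 1, with each M_t and V_t integrable and F_t-measurable. Then there exists a constant vector a = (a_1,…,a_{s+1}) ∈ R^{s+1} such that W_t := M_t + ∑_{i=1}^{s+1} a_i t^i V_t is a martingale with respect to (F_t). -/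
/-!
By Faulhaber's formula, `t ↦ -c ∑_{k<t} k^s` is a polynomial `p` of degree `s + 1` without
constant term, and `p (t + 1) + c t^s = p t`. Taking `a` to be its coefficients, the drift
`c t^s V_t` of `M` is exactly cancelled by the change of `p` along the martingale `V`.
-/

open MeasureTheory ProbabilityTheory Finset

theorem exists_coeffs_sum_mul_pow_succ_eq_sum_range_pow (s : ℕ) :
    ∃ b : Fin (s + 1) → ℚ, ∀ n : ℕ,
      ∑ i, b i * (n : ℚ) ^ (i.1 + 1) = ∑ k ∈ range n, (k : ℚ) ^ s := by
  refine ⟨fun i => bernoulli i.rev * (s + 1).choose i.rev / (s + 1), fun n => ?_⟩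
  rw [sum_range_pow, ← Fin.sum_univ_eq_sum_range]
  refine Fintype.sum_equiv Fin.revPerm _ _ fun i => ?_
  have hexp : s + 1 - i.rev.1 = i.1 + 1 := by rw [Fin.val_rev]; omega
  rw [Fin.revPerm_apply, hexp]
  ring

theorem exists_coeffs_sum_mul_pow_succ_add_mul_pow (c : ℝ) (s : ℕ) :
    ∃ a : Fin (s + 1) → ℝ, ∀ t : ℕ,
      ∑ i, a i * ((t : ℝ) + 1) ^ (i.1 + 1) + c * (t : ℝ) ^ s = ∑ i, a i * (t : ℝ) ^ (i.1 + 1) := by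
  obtain ⟨b, hb⟩ := exists_coeffs_sum_mul_pow_succ_eq_sum_range_pow s
  have hbℝ : ∀ n : ℕ, ∑ i, (b i : ℝ) * (n : ℝ) ^ (i.1 + 1) = ∑ k ∈ range n, (k : ℝ) ^ s :=
    fun n => mod_cast hb n
  refine ⟨fun i => -c * b i, fun t => ?_⟩
  have hsucc := hbℝ (t + 1)
  rw [sum_range_succ, ← hbℝ t] at hsucc
  push_cast at hsucc
  simp only [mul_assoc, ← mul_sum, hsucc]
  ring

theorem MeasureTheory.Martingale.condExp_add_mul {Ω : Type*} {m0 : MeasurableSpace Ω}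
    {P : Measure Ω} {F : Filtration ℕ m0} {V : ℕ → Ω → ℝ} (hV : Martingale V F P) {i j : ℕ}
    (hij : i ≤ j) {f : Ω → ℝ} (hf : Integrable f P) (e : ℝ) :
    P[fun ω => f ω + e * V j ω | F i] =ᵐ[P] fun ω => P[f | F i] ω + e * V i ω :=
  (condExp_add hf ((hV.integrable j).smul e) _).trans
    ((condExp_smul e (V j) _).trans (hV.condExp_ae_eq hij |>.const_smul e)).add_left

theorem stmt_12_general {Ω : Type*} {m0 : MeasurableSpace Ω} (P : Measure Ω)
    (F : Filtration ℕ m0) (c : ℝ) (s : ℕ)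
    (V M : ℕ → Ω → ℝ)
    (hV : Martingale V F P)
    (hMint : ∀ t, Integrable (M t) P)
    (hrec : ∀ t : ℕ, 1 ≤ t →
      (P[M (t + 1) | F t]) =ᵐ[P] fun ω => M t ω + c * (t : ℝ) ^ s * V t ω) :
    ∃ a : Fin (s + 1) → ℝ, ∀ t : ℕ, 1 ≤ t →
      (P[(fun ω => M (t + 1) ω + (∑ i, a i * ((t : ℝ) + 1) ^ (i.1 + 1)) * V (t + 1) ω)
          | F t]) =ᵐ[P]
        fun ω => M t ω + (∑ i, a i * (t : ℝ) ^ (i.1 + 1)) * V t ω := by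
  obtain ⟨a, ha⟩ := exists_coeffs_sum_mul_pow_succ_add_mul_pow c s
  refine ⟨a, fun t ht => ?_⟩
  filter_upwards [hV.condExp_add_mul (t.le_add_right 1) (hMint (t + 1)) _, hrec t ht]
    with ω hsplit hdrift
  rw [hsplit, hdrift, ← ha t]
  ring

theorem stmt_12 {Ω : Type*} {m0 : MeasurableSpace Ω} (P : Measure Ω) [IsProbabilityMeasure P]
    (F : Filtration ℕ m0) (c : ℝ) (hc : 0 < c) (s : ℕ)
    (V M : ℕ → Ω → ℝ)
    (hV : Martingale V F P)
    (hMadapted : Adapted F M)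
    (hMint : ∀ t, Integrable (M t) P)
    (hMVint : ∀ t, Integrable (fun ω => M t ω * V t ω) P)
    (hrec : ∀ t : ℕ, 1 ≤ t →
      (P[M (t + 1) | F t]) =ᵐ[P] fun ω => M t ω + c * (t : ℝ) ^ s * V t ω) :
    ∃ a : Fin (s + 1) → ℝ, ∀ t : ℕ, 1 ≤ t →
      (P[(fun ω => M (t + 1) ω + (∑ i, a i * ((t : ℝ) + 1) ^ (i.1 + 1)) * V (t + 1) ω)
          | F t]) =ᵐ[P]
        fun ω => M t ω + (∑ i, a i * (t : ℝ) ^ (i.1 + 1)) * V t ω :=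
  stmt_12_general P F c s V M hV hMint hrec
end

section
/- Under the GUCB policy with exploration rate ν_n ≥ 4γ̄² log n, for each suboptimal system k ≠ k* the expected number of pulls satisfies E[T_k(n)] ≤ 8ν_n/Δ_k² + 5, where Δ_k = μ* − μ_k > 0 and γ̄ = max_k γ_k. -/
/-!
Fix a suboptimal arm `k` with gap `Δ = μ* - μ_k` and let `u = ⌊8ν_n/Δ²⌋ + 1`. Once arm `k` has
`u` samples its confidence radius `√(2ν_{t+1}/T_k)` is below `Δ/2`, so GUCB can pull it at round
`t + 1` only if the index of the best arm lies below `μ*` or the sample mean of arm `k` exceeds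
`μ_k` by its radius. Hence `T_k(n) ≤ u + #{t < n : some such deviation happens at round t}`.
For any fixed sample size `m`, Hoeffding's inequality bounds each deviation by
`exp(-ν_{t+1}/γ̄²) ≤ (t+1)⁻⁴`; a union bound over `m ≤ t` gives `2/(t+1)²` per round, and these
sum to at most `4`.
-/

open MeasureTheory ProbabilityTheory Finset
open scoped NNReal

section SubGaussian

variable {Ω : Type*} [MeasurableSpace Ω] {μ : Measure Ω}

lemma hasSubgaussianMGF_of_lintegral_exp_le {X : Ω → ℝ} {c : ℝ≥0} (hX : Measurable X)
    (h : ∀ t : ℝ, ∫⁻ ω, ENNReal.ofReal (Real.exp (t * X ω)) ∂μ ≤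
      ENNReal.ofReal (Real.exp (c * t ^ 2 / 2))) :
    HasSubgaussianMGF X c μ := by
  have hexp : ∀ t, AEStronglyMeasurable (fun ω => Real.exp (t * X ω)) μ :=
    fun t => (hX.const_mul t).exp.aestronglyMeasurable
  have hexp_nonneg : ∀ t, 0 ≤ᵐ[μ] fun ω => Real.exp (t * X ω) :=
    fun t => ae_of_all _ fun ω => (Real.exp_pos _).le
  refine ⟨fun t => ⟨hexp t, ?_⟩, fun t => ?_⟩
  · rw [hasFiniteIntegral_iff_ofReal (hexp_nonneg t)]
    exact (h t).trans_lt ENNReal.ofReal_lt_top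
  · rw [mgf, integral_eq_lintegral_of_nonneg_ae (hexp_nonneg t) (hexp t)]
    exact ENNReal.toReal_le_of_le_ofReal (Real.exp_pos _).le (h t)

lemma ProbabilityTheory.HasSubgaussianMGF.mono {X : Ω → ℝ} {c c' : ℝ≥0}
    (h : HasSubgaussianMGF X c μ) (hc : c ≤ c') : HasSubgaussianMGF X c' μ :=
  ⟨h.integrable_exp_mul, fun t => (h.mgf_le t).trans (Real.exp_le_exp.mpr (by gcongr))⟩

def meanDeviation (Y : ℕ → Ω → ℝ) (a : ℝ) (m : ℕ) : Set Ω :=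
  {ω | Real.sqrt (2 * a / m) ≤ (∑ j ∈ range m, Y j ω) / m}

lemma measurableSet_meanDeviation {Y : ℕ → Ω → ℝ} (hY : ∀ j, Measurable (Y j)) (a : ℝ)
    (m : ℕ) : MeasurableSet (meanDeviation Y a m) :=
  measurableSet_le measurable_const ((Finset.measurable_sum _ fun j _ => hY j).div_const _)

lemma measureReal_meanDeviation_le {Y : ℕ → Ω → ℝ} {c : ℝ≥0} (hind : iIndepFun Y μ)
    (hY : ∀ j, HasSubgaussianMGF (Y j) c μ) {a : ℝ} (ha : 0 ≤ a) {m : ℕ} (hm : 0 < m) :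
    μ.real (meanDeviation Y a m) ≤ Real.exp (-a / c) := by
  have hm' : (0 : ℝ) < m := Nat.cast_pos.mpr hm
  have hset : meanDeviation Y a m =
      {ω | m * Real.sqrt (2 * a / m) ≤ ∑ j ∈ range m, Y j ω} := by
    ext ω
    simp only [meanDeviation, Set.mem_ofPred_eq, le_div_iff₀ hm', mul_comm]
  rw [hset]
  refine (HasSubgaussianMGF.measure_sum_range_ge_le_of_iIndepFun hind (fun j _ => hY j)
    (by positivity)).trans_eq ?_
  rw [mul_pow, Real.sq_sqrt (by positivity),
    show (m : ℝ) ^ 2 * (2 * a / m) = 2 * m * a by field_simp, neg_div,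
    mul_div_mul_left _ _ (by positivity), neg_div]

lemma measureReal_biUnion_meanDeviation_le {Y : ℕ → Ω → ℝ} {c : ℝ≥0} (hind : iIndepFun Y μ)
    (hY : ∀ j, HasSubgaussianMGF (Y j) c μ) {a : ℝ} (ha : 0 ≤ a) (t : ℕ) :
    μ.real (⋃ m ∈ Icc 1 t, meanDeviation Y a m) ≤ t * Real.exp (-a / c) :=
  calc μ.real (⋃ m ∈ Icc 1 t, meanDeviation Y a m)
      ≤ ∑ m ∈ Icc 1 t, μ.real (meanDeviation Y a m) := measureReal_biUnion_finset_le _ _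
    _ ≤ ∑ _m ∈ Icc 1 t, Real.exp (-a / c) := sum_le_sum fun m hm =>
        measureReal_meanDeviation_le hind hY ha (mem_Icc.mp hm).1
    _ = t * Real.exp (-a / c) := by simp

end SubGaussian

lemma exp_neg_div_le_inv_pow {a c x : ℝ} (n : ℕ) (hc : 0 < c) (hx : 0 < x)
    (h : n * c * Real.log x ≤ a) : Real.exp (-a / c) ≤ (x ^ n)⁻¹ := by
  rw [← Real.exp_log (pow_pos hx n), ← Real.exp_neg, Real.exp_le_exp, Real.log_pow, neg_div,
    neg_le_neg_iff, le_div_iff₀ hc]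
  linarith

lemma sum_Ico_mul_inv_add_one_pow_four_le_two (K n : ℕ) :
    ∑ t ∈ Ico K n, (t : ℝ) * (((t : ℝ) + 1) ^ 4)⁻¹ ≤ 2 := by
  have hterm : ∀ t : ℕ, (t : ℝ) * (((t : ℝ) + 1) ^ 4)⁻¹ ≤ (((t + 1 : ℕ) : ℝ) ^ 2)⁻¹ := fun t => by
    push_cast
    rw [← div_eq_mul_inv, div_le_iff₀ (by positivity),
      show ((t : ℝ) + 1) ^ 4 = ((t : ℝ) + 1) ^ 2 * ((t : ℝ) + 1) ^ 2 by ring, ← mul_assoc,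
      inv_mul_cancel₀ (by positivity), one_mul]
    nlinarith
  calc ∑ t ∈ Ico K n, (t : ℝ) * (((t : ℝ) + 1) ^ 4)⁻¹
      ≤ ∑ t ∈ Ico K n, (((t + 1 : ℕ) : ℝ) ^ 2)⁻¹ := sum_le_sum fun t _ => hterm t
    _ = ∑ i ∈ Ioo K (n + 1), ((i : ℝ) ^ 2)⁻¹ := by
        rw [sum_Ico_add' (fun i : ℕ => ((i : ℝ) ^ 2)⁻¹), ← Order.succ_eq_add_one K,
          Finset.Ico_succ_left_eq_Ioo]
    _ ≤ 2 / (K + 1) := sum_Ioo_inv_sq_le K (n + 1)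
    _ ≤ 2 := div_le_self zero_le_two (le_add_of_nonneg_left K.cast_nonneg)

lemma integral_le_add_sum_measureReal {Ω ι : Type*} [MeasurableSpace Ω] {μ : Measure Ω}
    [IsProbabilityMeasure μ] {f : Ω → ℝ} (hf0 : 0 ≤ f) {E : ι → Set Ω}
    (hE : ∀ i, MeasurableSet (E i)) {s : Finset ι} [∀ ω, DecidablePred fun i => ω ∈ E i]
    {b : ℝ} (hf : ∀ ω, f ω ≤ b + #{i ∈ s | ω ∈ E i}) :
    ∫ ω, f ω ∂μ ≤ b + ∑ i ∈ s, μ.real (E i) := by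
  have hint : ∀ i, Integrable ((E i).indicator (1 : Ω → ℝ)) μ :=
    fun i => (integrable_const 1).indicator (hE i)
  have hsum : Integrable (fun ω => ∑ i ∈ s, (E i).indicator (1 : Ω → ℝ) ω) μ :=
    integrable_finsetSum s fun i _ => hint i
  calc ∫ ω, f ω ∂μ ≤ ∫ ω, (b + ∑ i ∈ s, (E i).indicator (1 : Ω → ℝ) ω) ∂μ := by
        refine integral_mono_of_nonneg (ae_of_all _ hf0) ((integrable_const b).add hsum)
          (ae_of_all _ fun ω => (hf ω).trans_eq ?_)
        simp [Set.indicator_apply, sum_boole]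
    _ = b + ∑ i ∈ s, μ.real (E i) := by
        rw [integral_add (integrable_const b) hsum, integral_finsetSum s fun i _ => hint i]
        simp [integral_indicator_one (hE _)]

section Counting

variable {a : ℕ → ℕ} {p : ℕ → Prop} [DecidablePred p] {K : ℕ}

lemma le_and_le_add_sub_of_succ_eq_add_ite
    (hrec : ∀ t, K ≤ t → a (t + 1) = a t + if p t then 1 else 0) {n : ℕ} (hn : K ≤ n) :
    a K ≤ a n ∧ a n ≤ a K + (n - K) := by
  induction n, hn using Nat.le_induction with
  | base => simp
  | succ n hn ih =>
    rw [hrec n hn]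
    split <;> omega

lemma le_add_card_filter_of_succ_eq_add_ite
    (hrec : ∀ t, K ≤ t → a (t + 1) = a t + if p t then 1 else 0) {u : ℕ} (hu : a K ≤ u)
    {n : ℕ} (hn : K ≤ n) :
    a n ≤ u + #{t ∈ Ico K n | p t ∧ u ≤ a t} := by
  induction n, hn using Nat.le_induction with
  | base => simpa
  | succ n hn ih =>
    rw [hrec n hn, card_filter, sum_Ico_succ_top hn, ← card_filter]
    rw [ite_and]
    split_ifs <;> omega

end Counting

lemma sum_range_sub_const_div {z : ℕ → ℝ} (c : ℝ) {m : ℕ} (hm : 0 < m) :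
    (∑ j ∈ range m, (z j - c)) / m = (∑ j ∈ range m, z j) / m - c := by
  rw [sum_sub_distrib, sum_const, card_range, nsmul_eq_mul, sub_div,
    mul_div_cancel_left₀ _ (by positivity)]

lemma sum_range_const_sub_div {z : ℕ → ℝ} (c : ℝ) {m : ℕ} (hm : 0 < m) :
    (∑ j ∈ range m, (c - z j)) / m = c - (∑ j ∈ range m, z j) / m := by
  rw [sum_sub_distrib, sum_const, card_range, nsmul_eq_mul, sub_div,
    mul_div_cancel_left₀ _ (by positivity)]

lemma radius_le_or_radius_le_of_index_le {x y : ℕ → ℝ} {μ₁ μ₂ a : ℝ} {m₁ m₂ : ℕ}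
    (hm₁ : 0 < m₁) (hm₂ : 0 < m₂)
    (hidx : (∑ j ∈ range m₁, x j) / m₁ + Real.sqrt (2 * a / m₁) ≤
      (∑ j ∈ range m₂, y j) / m₂ + Real.sqrt (2 * a / m₂))
    (hr : 2 * Real.sqrt (2 * a / m₂) < μ₁ - μ₂) :
    Real.sqrt (2 * a / m₁) ≤ (∑ j ∈ range m₁, (μ₁ - x j)) / m₁ ∨
      Real.sqrt (2 * a / m₂) ≤ (∑ j ∈ range m₂, (y j - μ₂)) / m₂ := by
  rw [sum_range_const_sub_div μ₁ hm₁, sum_range_sub_const_div μ₂ hm₂]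
  by_contra! h
  linarith

lemma two_mul_sqrt_two_mul_div_lt {Δ a b : ℝ} {m : ℕ} (hΔ : 0 < Δ) (hm : 0 < m) (hab : a ≤ b)
    (hbm : 8 * b / Δ ^ 2 < m) : 2 * Real.sqrt (2 * a / m) < Δ := by
  have hm' : (0 : ℝ) < m := Nat.cast_pos.mpr hm
  rw [← lt_div_iff₀' two_pos, Real.sqrt_lt' (by positivity), div_lt_iff₀ hm']
  rw [div_lt_iff₀ (by positivity)] at hbm
  nlinarith

section GUCB

variable {Ω : Type*} {K : ℕ}

def confidenceFailure (X : Fin K → ℕ → Ω → ℝ) (μ : Fin K → ℝ) (ν : ℕ → ℝ) (kstar k : Fin K)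
    (t : ℕ) : Set Ω :=
  (⋃ m ∈ Icc 1 t, meanDeviation (fun j ω => μ kstar - X kstar j ω) (ν (t + 1)) m) ∪
    ⋃ m ∈ Icc 1 t, meanDeviation (fun j ω => X k j ω - μ k) (ν (t + 1)) m

lemma measurableSet_confidenceFailure [MeasurableSpace Ω] {X : Fin K → ℕ → Ω → ℝ}
    (hmeas : ∀ i j, Measurable (X i j)) (μ : Fin K → ℝ) (ν : ℕ → ℝ) (kstar k : Fin K) (t : ℕ) :
    MeasurableSet (confidenceFailure X μ ν kstar k t) :=
  (Finset.measurableSet_biUnion _ fun m _ => measurableSet_meanDeviation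
      (fun j => measurable_const.sub (hmeas kstar j)) _ m).union
    (Finset.measurableSet_biUnion _ fun m _ => measurableSet_meanDeviation
      (fun j => (hmeas k j).sub_const _) _ m)

lemma measureReal_confidenceFailure_le [MeasurableSpace Ω] {P : Measure Ω}
    {X : Fin K → ℕ → Ω → ℝ} {μ : Fin K → ℝ} {c : ℝ≥0}
    (hindep : iIndepFun (fun p : Fin K × ℕ => X p.1 p.2) P)
    (hsubG : ∀ i j, HasSubgaussianMGF (fun ω => X i j ω - μ i) c P) (hc : 0 < c) {ν : ℕ → ℝ}
    {t : ℕ} (hν : 4 * c * Real.log (t + 1) ≤ ν (t + 1)) (kstar k : Fin K) :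
    P.real (confidenceFailure X μ ν kstar k t) ≤ 2 * (t * (((t : ℝ) + 1) ^ 4)⁻¹) := by
  have hind : ∀ i (f : ℝ → ℝ), Measurable f → iIndepFun (fun j ω => f (X i j ω)) P :=
    fun i f hf => (hindep.precomp (Prod.mk_right_injective i)).comp (fun _ => f) (fun _ => hf)
  have hlog : 0 ≤ Real.log (t + 1) := Real.log_nonneg (by simp)
  have hν0 : 0 ≤ ν (t + 1) := le_trans (by positivity) hν
  have hexp : Real.exp (-ν (t + 1) / c) ≤ (((t : ℝ) + 1) ^ 4)⁻¹ :=
    exp_neg_div_le_inv_pow 4 (by exact_mod_cast hc) (by positivity) (by exact_mod_cast hν)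
  have hopt := measureReal_biUnion_meanDeviation_le
    (hind kstar (fun x => μ kstar - x) (measurable_const.sub measurable_id))
    (fun j => (hsubG kstar j).neg.congr (ae_of_all _ fun ω => by simp)) hν0 t
  have hk := measureReal_biUnion_meanDeviation_le
    (hind k (fun x => x - μ k) (measurable_id.sub_const _)) (hsubG k) hν0 t
  have ht : (t : ℝ) * Real.exp (-ν (t + 1) / c) ≤ t * (((t : ℝ) + 1) ^ 4)⁻¹ := by gcongr
  refine (measureReal_union_le _ _).trans ?_
  linarith

open Classical in
lemma gucb_pulls_le {μ : Fin K → ℝ} {kstar k : Fin K} (hgap : μ k < μ kstar)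
    {X : Fin K → ℕ → Ω → ℝ} {ν : ℕ → ℝ} (hνmono : Monotone ν) {T : ℕ → Fin K → Ω → ℕ}
    {I : ℕ → Ω → Fin K} {ω : Ω} (hinit : ∀ i, T K i ω = 1)
    (hTrec : ∀ t, K ≤ t → ∀ i, T (t + 1) i ω = T t i ω + if I (t + 1) ω = i then 1 else 0)
    (hargmax : ∀ t, K ≤ t → ∀ i,
      (∑ j ∈ range (T t i ω), X i j ω) / (T t i ω : ℝ) +
          Real.sqrt (2 * ν (t + 1) / (T t i ω : ℝ)) ≤
        (∑ j ∈ range (T t (I (t + 1) ω) ω), X (I (t + 1) ω) j ω) / (T t (I (t + 1) ω) ω : ℝ) +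
          Real.sqrt (2 * ν (t + 1) / (T t (I (t + 1) ω) ω : ℝ)))
    {n : ℕ} (hn : K ≤ n) :
    T n k ω ≤ ⌊8 * ν n / (μ kstar - μ k) ^ 2⌋₊ + 1 +
      #{t ∈ Ico K n | ω ∈ confidenceFailure X μ ν kstar k t} := by
  have hK : 1 ≤ K := k.pos
  set u := ⌊8 * ν n / (μ kstar - μ k) ^ 2⌋₊ + 1
  refine (le_add_card_filter_of_succ_eq_add_ite (a := fun t => T t k ω)
    (p := fun t => I (t + 1) ω = k) (fun t ht => hTrec t ht k)
    (by rw [hinit]; omega : T K k ω ≤ u) hn).trans (Nat.add_le_add_left (card_le_card ?_) _)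
  intro t ht
  simp only [mem_filter, mem_Ico] at ht ⊢
  obtain ⟨⟨hKt, htn⟩, hI, hu⟩ := ht
  refine ⟨⟨hKt, htn⟩, ?_⟩
  have hrange : ∀ i, 1 ≤ T t i ω ∧ T t i ω ≤ t := fun i => by
    have := le_and_le_add_sub_of_succ_eq_add_ite (a := fun s => T s i ω)
      (p := fun s => I (s + 1) ω = i) (fun s hs => hTrec s hs i) hKt
    rw [hinit] at this
    omega
  have hidx := hargmax t hKt kstar
  rw [hI] at hidx
  have hradius : 2 * Real.sqrt (2 * ν (t + 1) / (T t k ω : ℝ)) < μ kstar - μ k :=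
    two_mul_sqrt_two_mul_div_lt (sub_pos.mpr hgap) (hrange k).1 (hνmono htn)
      ((Nat.lt_floor_add_one _).trans_le (by exact_mod_cast hu))
  simp only [confidenceFailure, meanDeviation, Set.mem_union, Set.mem_iUnion, Set.mem_ofPred_eq,
    exists_prop]
  rcases radius_le_or_radius_le_of_index_le (hrange kstar).1 (hrange k).1 hidx hradius with h | h
  · exact Or.inl ⟨T t kstar ω, mem_Icc.mpr (hrange kstar), h⟩
  · exact Or.inr ⟨T t k ω, mem_Icc.mpr (hrange k), h⟩

end GUCB

theorem stmt_13_general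
    {Ω : Type*} [MeasurableSpace Ω] (P : Measure Ω) [IsProbabilityMeasure P]
    (K : ℕ)
    (μ γ : Fin K → ℝ) (kstar : Fin K) (γbar : ℝ)
    (hγpos : ∀ k, 0 < γ k) (hγbar : ∀ k, γ k ≤ γbar)
    (hgap : ∀ k, k ≠ kstar → μ k < μ kstar)
    (X : Fin K → ℕ → Ω → ℝ)
    (hmeas : ∀ k j, Measurable (X k j))
    (hindep : iIndepFun (fun p : Fin K × ℕ => X p.1 p.2) P)
    (hsub : ∀ k j, ∀ lam : ℝ,
      ∫⁻ ω, ENNReal.ofReal (Real.exp (lam * (X k j ω - μ k))) ∂P ≤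
        ENNReal.ofReal (Real.exp (γ k ^ 2 * lam ^ 2 / 2)))
    (ν : ℕ → ℝ) (hνmono : Monotone ν)
    (T : ℕ → Fin K → Ω → ℕ) (I : ℕ → Ω → Fin K)
    (hinit : ∀ k ω, T K k ω = 1)
    (hTrec : ∀ n, K ≤ n → ∀ k ω,
      T (n + 1) k ω = T n k ω + if I (n + 1) ω = k then 1 else 0)
    (hargmax : ∀ n, K ≤ n → ∀ ω k,
      (∑ j ∈ Finset.range (T n k ω), X k j ω) / (T n k ω : ℝ) +
          Real.sqrt (2 * ν (n + 1) / (T n k ω : ℝ)) ≤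
        (∑ j ∈ Finset.range (T n (I (n + 1) ω) ω), X (I (n + 1) ω) j ω) /
            (T n (I (n + 1) ω) ω : ℝ) +
          Real.sqrt (2 * ν (n + 1) / (T n (I (n + 1) ω) ω : ℝ)))
    (hν : ∀ n : ℕ, 4 * γbar ^ 2 * Real.log n ≤ ν n) :
    ∀ k, k ≠ kstar → ∀ n, K ≤ n →
      (∫ ω, (T n k ω : ℝ) ∂P) ≤ 8 * ν n / (μ kstar - μ k) ^ 2 + 5 := by
  intro k hk n hn
  classical
  have hγbar_pos : 0 < γbar := (hγpos k).trans_le (hγbar k)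
  set c : ℝ≥0 := ⟨γbar ^ 2, sq_nonneg γbar⟩
  have hsubG : ∀ i j, HasSubgaussianMGF (fun ω => X i j ω - μ i) c P := fun i j =>
    (hasSubgaussianMGF_of_lintegral_exp_le (c := ⟨γ i ^ 2, sq_nonneg _⟩)
      ((hmeas i j).sub_const _) (hsub i j)).mono (pow_le_pow_left₀ (hγpos i).le (hγbar i) 2)
  have hfail : ∀ t, P.real (confidenceFailure X μ ν kstar k t) ≤ 2 * (t * (((t : ℝ) + 1) ^ 4)⁻¹) :=
    fun t => measureReal_confidenceFailure_le hindep hsubG (pow_pos hγbar_pos 2)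
      (by have h := hν (t + 1); push_cast at h; exact h) kstar k
  have hpulls : ∀ ω, (T n k ω : ℝ) ≤ ((⌊8 * ν n / (μ kstar - μ k) ^ 2⌋₊ + 1 : ℕ) : ℝ) +
      #{t ∈ Ico K n | ω ∈ confidenceFailure X μ ν kstar k t} := fun ω => by
    exact_mod_cast gucb_pulls_le (hgap k hk) hνmono (fun i => hinit i ω)
      (fun t ht i => hTrec t ht i ω) (fun t ht i => hargmax t ht ω i) hn
  have hexpect := integral_le_add_sum_measureReal (μ := P) (fun ω => Nat.cast_nonneg _)
    (measurableSet_confidenceFailure hmeas μ ν kstar k) hpulls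
  have hsum : ∑ t ∈ Ico K n, P.real (confidenceFailure X μ ν kstar k t) ≤ 4 := by
    refine (sum_le_sum fun t _ => hfail t).trans ?_
    rw [← mul_sum]
    linarith [sum_Ico_mul_inv_add_one_pow_four_le_two K n]
  have hν0 : 0 ≤ ν n := (mul_nonneg (by positivity) (Real.log_natCast_nonneg n)).trans (hν n)
  have hfloor := Nat.floor_le (by positivity : 0 ≤ 8 * ν n / (μ kstar - μ k) ^ 2)
  push_cast at hexpect
  linarith

theorem stmt_13
    {Ω : Type*} [MeasurableSpace Ω] (P : Measure Ω) [IsProbabilityMeasure P]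
    (K : ℕ) (hK : 1 ≤ K)
    (μ γ : Fin K → ℝ) (kstar : Fin K) (γbar : ℝ)
    (hγpos : ∀ k, 0 < γ k) (hγbar : ∀ k, γ k ≤ γbar)
    (hgap : ∀ k, k ≠ kstar → μ k < μ kstar)
    (X : Fin K → ℕ → Ω → ℝ)
    (hmeas : ∀ k j, Measurable (X k j))
    (hindep : iIndepFun (fun p : Fin K × ℕ => X p.1 p.2) P)
    (hident : ∀ k j, IdentDistrib (X k j) (X k 0) P P)
    (hint : ∀ k j, Integrable (X k j) P)
    (hmean : ∀ k, ∫ ω, X k 0 ω ∂P = μ k)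
    (hsub : ∀ k j, ∀ lam : ℝ,
      ∫⁻ ω, ENNReal.ofReal (Real.exp (lam * (X k j ω - μ k))) ∂P ≤
        ENNReal.ofReal (Real.exp (γ k ^ 2 * lam ^ 2 / 2)))
    (ν : ℕ → ℝ) (hνmono : Monotone ν)
    (T : ℕ → Fin K → Ω → ℕ) (I : ℕ → Ω → Fin K)
    (hTmeas : ∀ n k, Measurable (fun ω => T n k ω))
    (hImeas : ∀ n, Measurable (I n))
    (hinit : ∀ k ω, T K k ω = 1)
    (hTrec : ∀ n, K ≤ n → ∀ k ω,
      T (n + 1) k ω = T n k ω + if I (n + 1) ω = k then 1 else 0)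
    (hargmax : ∀ n, K ≤ n → ∀ ω k,
      (∑ j ∈ Finset.range (T n k ω), X k j ω) / (T n k ω : ℝ) +
          Real.sqrt (2 * ν (n + 1) / (T n k ω : ℝ)) ≤
        (∑ j ∈ Finset.range (T n (I (n + 1) ω) ω), X (I (n + 1) ω) j ω) /
            (T n (I (n + 1) ω) ω : ℝ) +
          Real.sqrt (2 * ν (n + 1) / (T n (I (n + 1) ω) ω : ℝ)))
    (hν : ∀ n : ℕ, 4 * γbar ^ 2 * Real.log n ≤ ν n) :
    ∀ k, k ≠ kstar → ∀ n, K ≤ n →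
      (∫ ω, (T n k ω : ℝ) ∂P) ≤ 8 * ν n / (μ kstar - μ k) ^ 2 + 5 :=
  stmt_13_general P K μ γ kstar γbar hγpos hγbar hgap X hmeas hindep hsub ν hνmono T I hinit hTrec
    hargmax hν
end
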